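/- arXiv:1902.08057 — 3 statements merged into one kernel-verified Lean document; each statement's English description precedes it below -/
import Mathlib

section
/- Let A be an n×n complex matrix, V an n×k matrix with orthonormal columns (V*V = I), θ a complex scalar, and y a unit vector in C^k. Suppose w := (I - yy*)z minimizes ‖(A - θI)Vy + (A - θI)V(I - yy*)z‖ over all z ∈ C^k. Then with m := y + w, one has ‖(A - θI)Vm‖² = ‖(A - θI)Vy‖² - ‖(A - θI)Vw‖². -/
open Matrix
open scoped ComplexConjugate

/-- Squared Euclidean norm of a complex vector. -/
noncomputable def nsq {k : ℕ} (x : Fin k → ℂ) : ℝ := ∑ i, ‖x i‖ ^ 2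

/-- Standard Hermitian inner product (conjugate-linear in the first argument). -/
noncomputable def cip {k : ℕ} (x y : Fin k → ℂ) : ℂ := ∑ i, conj (x i) * y i

/-- Orthogonal projection `(I - yy*) v`. -/
noncomputable def proj {k : ℕ} (y v : Fin k → ℂ) : Fin k → ℂ := v - cip y v • y

/-! Since `y ⊥ w`, every point `y + (1 + c) w` lies in the admissible set, so
`u = (A - θI)V(y + w)` is no longer than `u + c (A - θI)Vw` for every `c ∈ ℂ`; hence `u` is
orthogonal to `(A - θI)Vw`, and Pythagoras applied to `(A - θI)Vy = u - (A - θI)Vw` gives the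
identity. -/

section Minimizer

variable {𝕜 E : Type*} [RCLike 𝕜] [NormedAddCommGroup E] [InnerProductSpace 𝕜 E]

theorem inner_eq_zero_of_forall_norm_le_norm_add_smul {u v : E}
    (h : ∀ c : 𝕜, ‖u‖ ≤ ‖u + c • v‖) : inner 𝕜 u v = 0 := by
  have hmin : ‖u - 0‖ = ⨅ x : (𝕜 ∙ v), ‖u - x‖ := by
    refine le_antisymm (le_ciInf fun ⟨x, hx⟩ => ?_) ?_
    · obtain ⟨c, rfl⟩ := Submodule.mem_span_singleton.1 hx
      simpa [sub_eq_add_neg, ← neg_smul] using h (-c)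
    · exact ciInf_le ⟨0, Set.forall_mem_range.2 fun _ => norm_nonneg _⟩ (0 : 𝕜 ∙ v)
  simpa using (Submodule.norm_eq_iInf_iff_inner_eq_zero _ (Submodule.zero_mem _)).1 hmin v
    (Submodule.mem_span_singleton_self v)

theorem norm_sub_sq_eq_of_forall_norm_le_norm_add_smul {u v : E}
    (h : ∀ c : 𝕜, ‖u‖ ≤ ‖u + c • v‖) : ‖u - v‖ ^ 2 = ‖u‖ ^ 2 + ‖v‖ ^ 2 := by
  have horth : inner 𝕜 u (-v) = 0 := by
    rw [inner_neg_right, inner_eq_zero_of_forall_norm_le_norm_add_smul h, neg_zero]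
  simpa [sq, sub_eq_add_neg] using norm_add_sq_eq_norm_sq_add_norm_sq_of_inner_eq_zero u (-v) horth

end Minimizer

section ComplexVectors

variable {k : ℕ}

theorem nsq_eq_norm_sq (x : Fin k → ℂ) : nsq x = ‖WithLp.toLp 2 x‖ ^ 2 := by
  rw [EuclideanSpace.norm_eq, Real.sq_sqrt (by positivity)]
  rfl

theorem cip_eq_dotProduct (x y : Fin k → ℂ) : cip x y = star x ⬝ᵥ y := rfl

theorem cip_self (x : Fin k → ℂ) : cip x x = nsq x := by
  simp [cip, nsq, Complex.conj_mul']

theorem proj_add_smul_proj {y : Fin k → ℂ} (hy : cip y y = 1) (z : Fin k → ℂ) (c : ℂ) :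
    proj y (z + c • proj y z) = (1 + c) • proj y z := by
  simp only [proj, cip_eq_dotProduct] at hy ⊢
  simp only [dotProduct_add, dotProduct_sub, dotProduct_smul, hy]
  module

end ComplexVectors

theorem stmt0_general {n k : ℕ} (A : Matrix (Fin n) (Fin n) ℂ) (V : Matrix (Fin n) (Fin k) ℂ)
    (θ : ℂ) (y z : Fin k → ℂ)
    (hy : nsq y = 1)
    (w : Fin k → ℂ) (hw : w = proj y z)
    (hmin : ∀ z' : Fin k → ℂ,
      nsq ((A - θ • 1).mulVec (V.mulVec (y + w)))
        ≤ nsq ((A - θ • 1).mulVec (V.mulVec (y + proj y z')))) :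
    nsq ((A - θ • 1).mulVec (V.mulVec (y + w)))
      = nsq ((A - θ • 1).mulVec (V.mulVec y))
        - nsq ((A - θ • 1).mulVec (V.mulVec w)) := by
  simp only [mulVec_mulVec, nsq_eq_norm_sq] at hmin ⊢
  set M := (A - θ • 1) * V
  have hyy : cip y y = 1 := by rw [cip_self, hy, Complex.ofReal_one]
  have hline (c : ℂ) : ‖WithLp.toLp 2 (M *ᵥ (y + w))‖ ≤
      ‖WithLp.toLp 2 (M *ᵥ (y + w)) + c • WithLp.toLp 2 (M *ᵥ w)‖ := by
    have h := hmin (z + c • w)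
    rw [hw, proj_add_smul_proj hyy, add_smul, one_smul, ← add_assoc,
      pow_le_pow_iff_left₀ (norm_nonneg _) (norm_nonneg _) two_ne_zero] at h
    rwa [← WithLp.toLp_smul, ← WithLp.toLp_add, ← mulVec_smul, ← mulVec_add, hw]
  have hsplit :
      WithLp.toLp 2 (M *ᵥ (y + w)) - WithLp.toLp 2 (M *ᵥ w) = WithLp.toLp 2 (M *ᵥ y) := by
    rw [← WithLp.toLp_sub, mulVec_add, add_sub_cancel_right]
  rw [← hsplit, norm_sub_sq_eq_of_forall_norm_le_norm_add_smul hline]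
  ring

theorem stmt0 {n k : ℕ} (A : Matrix (Fin n) (Fin n) ℂ) (V : Matrix (Fin n) (Fin k) ℂ)
    (θ : ℂ) (y z : Fin k → ℂ)
    (hV : Vᴴ * V = 1) (hy : nsq y = 1)
    (w : Fin k → ℂ) (hw : w = proj y z)
    (hmin : ∀ z' : Fin k → ℂ,
      nsq ((A - θ • 1).mulVec (V.mulVec (y + w)))
        ≤ nsq ((A - θ • 1).mulVec (V.mulVec (y + proj y z')))) :
    nsq ((A - θ • 1).mulVec (V.mulVec (y + w)))
      = nsq ((A - θ • 1).mulVec (V.mulVec y))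
        - nsq ((A - θ • 1).mulVec (V.mulVec w)) :=
  stmt0_general A V θ y z hy w hw hmin
end

section
/- Let τ > 1 and let α₆ be the positive root of the quadratic equation 4α² - (2τ - 2)α - 2τ² - τ = 0, i.e., α₆ = ((τ - 1) + √(9τ² + 2τ + 1))/4. Let α₃ = 2τα₆/(τ + α₆), the harmonic mean of τ and α₆. Then α₃ = 2τ(τ - 1 + √(9τ² + 2τ + 1))/(5τ - 1 + √(9τ² + 2τ + 1)) and α₃ ≤ τ - 1/14. -/
/-!
`α₃` is the harmonic mean of `τ` and `α₆`, which is increasing in `α₆`, and the harmonic mean of `τ`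
and `τ (τ - 1/14) / (τ + 1/14)` is exactly `τ - 1/14`. So it suffices to bound `α₆` by the latter,
which after clearing the square root reads `4τ (28τ² - 24τ - 3) ≥ 0`. This holds for `τ ≥ 1`
because `28τ² - 24τ - 3 = 28(τ - 1)² + 32(τ - 1) + 1`; the margin at `τ = 1` is small.
-/

noncomputable def harmonicMean (a b : ℝ) : ℝ := 2 * a * b / (a + b)

lemma harmonicMean_le_harmonicMean_right {a x y : ℝ} (ha : 0 < a) (hx : 0 ≤ x) (hxy : x ≤ y) :
    harmonicMean a x ≤ harmonicMean a y := by
  unfold harmonicMean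
  rw [div_le_div_iff₀ (by positivity) (by linarith)]
  nlinarith [mul_le_mul_of_nonneg_left hxy (sq_nonneg a)]

lemma harmonicMean_eq_sub {a ε : ℝ} (ha : a ≠ 0) (hε : a + ε ≠ 0) :
    harmonicMean a (a * (a - ε) / (a + ε)) = a - ε := by
  unfold harmonicMean
  rw [show a + a * (a - ε) / (a + ε) = 2 * a ^ 2 / (a + ε) by field_simp; ring]
  field_simp

lemma sqrt_discr_mul_le {τ : ℝ} (hτ : 1 ≤ τ) :
    √(9 * τ ^ 2 + 2 * τ + 1) * (14 * τ + 1) ≤ 42 * τ ^ 2 + 9 * τ + 1 := by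
  rw [← pow_le_pow_iff_left₀ (by positivity) (by positivity) two_ne_zero, mul_pow,
    Real.sq_sqrt (by positivity)]
  have hgap : (42 * τ ^ 2 + 9 * τ + 1) ^ 2 - (9 * τ ^ 2 + 2 * τ + 1) * (14 * τ + 1) ^ 2
      = 4 * τ * (28 * (τ - 1) ^ 2 + 32 * (τ - 1) + 1) := by ring
  have hτ₁ : 0 ≤ τ - 1 := by linarith
  have : 0 ≤ 4 * τ * (28 * (τ - 1) ^ 2 + 32 * (τ - 1) + 1) := by positivity
  linarith

theorem stmt15 (τ α₆ α₃ : ℝ) (hτ : 1 < τ)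
    (hα₆ : α₆ = ((τ - 1) + Real.sqrt (9 * τ ^ 2 + 2 * τ + 1)) / 4)
    (hα₃ : α₃ = 2 * τ * α₆ / (τ + α₆)) :
    α₃ = 2 * τ * (τ - 1 + Real.sqrt (9 * τ ^ 2 + 2 * τ + 1)) /
        (5 * τ - 1 + Real.sqrt (9 * τ ^ 2 + 2 * τ + 1)) ∧
      α₃ ≤ τ - 1 / 14 := by
  set s := √(9 * τ ^ 2 + 2 * τ + 1)
  have hs : 0 ≤ s := Real.sqrt_nonneg _
  constructor
  · rw [hα₃, hα₆, show τ + (τ - 1 + s) / 4 = (5 * τ - 1 + s) / 4 by ring, mul_div_assoc',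
      div_div_div_cancel_right₀ four_ne_zero]
  have hα₆_le : α₆ ≤ τ * (τ - 1 / 14) / (τ + 1 / 14) := by
    rw [hα₆, div_le_div_iff₀ four_pos (by linarith)]
    linarith [sqrt_discr_mul_le hτ.le]
  calc α₃ = harmonicMean τ α₆ := hα₃
    _ ≤ harmonicMean τ (τ * (τ - 1 / 14) / (τ + 1 / 14)) :=
      harmonicMean_le_harmonicMean_right (by linarith) (by rw [hα₆]; linarith) hα₆_le
    _ = τ - 1 / 14 := harmonicMean_eq_sub (by linarith) (by linarith)
end

section
/- Let (θ, Vy) be a Ritz pair of A with respect to V (V*V = I, ‖y‖ = 1, V*(A - θI)Vy = 0) that is not an exact eigenpair, and let x satisfy V*(A - θI)*(A - θI)Vx = y. If K is a scalar satisfying K = ‖(A - θI)Vy‖² + K·⟨(A - θI)V(I - yy*)x, (A - θI)Vy⟩, then the vector m := y + K(I - yy*)x satisfies the least-squares normal equations (I - yy*)V*(A - θI)*(A - θI)V(m - y) = -(I - yy*)V*(A - θI)*(A - θI)Vy; equivalently V*(A - θI)*(A - θI)Vm = Ky. -/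
open Matrix
open scoped ComplexConjugate

/-!
Put `B = (A - θI)V`, so that `M = B*B` is Hermitian, and `r = ⟨y, x⟩ = ⟨Mx, x⟩`, which is real.
Since `⟨x, My⟩ = ⟨Mx, y⟩ = 1`, the inner product in the fixed-point equation is
`⟨(I - yy*)x, My⟩ = 1 - r‖By‖²`, so the equation says `K r ‖By‖² = ‖By‖²`, i.e. `K r = 1` as `By ≠ 0`.
Then `Mm = My + K(y - r My) = Ky`, and projecting `M(m - y) = Ky - My` onto `y^⊥` gives the normal
equations.
-/

section Cip

variable {k : ℕ}

lemma cip_eq_star_dotProduct (a b : Fin k → ℂ) : cip a b = star a ⬝ᵥ b := by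
  simp [cip, dotProduct, RCLike.star_def]

lemma star_cip (a b : Fin k → ℂ) : star (cip a b) = cip b a := by
  rw [cip_eq_star_dotProduct, cip_eq_star_dotProduct, star_dotProduct, star_star]

lemma cip_self_eq_nsq (a : Fin k → ℂ) : cip a a = (nsq a : ℂ) := by
  simp only [cip, nsq]
  push_cast
  exact Finset.sum_congr rfl fun i _ => by rw [mul_comm, Complex.mul_conj']

open scoped ComplexOrder in
lemma cip_self_eq_zero {a : Fin k → ℂ} : cip a a = 0 ↔ a = 0 := by
  rw [cip_eq_star_dotProduct, dotProduct_star_self_eq_zero]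

lemma cip_sub_left (a b c : Fin k → ℂ) : cip (a - b) c = cip a c - cip b c := by
  simp only [cip_eq_star_dotProduct, star_sub, sub_dotProduct]

lemma cip_smul_left (s : ℂ) (a b : Fin k → ℂ) : cip (s • a) b = star s * cip a b := by
  simp only [cip_eq_star_dotProduct, star_smul, smul_dotProduct, smul_eq_mul]

lemma cip_sub_right (a b c : Fin k → ℂ) : cip a (b - c) = cip a b - cip a c := by
  simp only [cip_eq_star_dotProduct, dotProduct_sub]

lemma cip_smul_right (s : ℂ) (a b : Fin k → ℂ) : cip a (s • b) = s * cip a b := by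
  simp only [cip_eq_star_dotProduct, dotProduct_smul, smul_eq_mul]

lemma cip_mulVec {p : ℕ} (N : Matrix (Fin p) (Fin k) ℂ) (u : Fin p → ℂ) (v : Fin k → ℂ) :
    cip u (N *ᵥ v) = cip (Nᴴ *ᵥ u) v := by
  rw [cip_eq_star_dotProduct, cip_eq_star_dotProduct, star_mulVec, conjTranspose_conjTranspose,
    dotProduct_mulVec]

lemma cip_mulVec_mulVec {p : ℕ} (B : Matrix (Fin p) (Fin k) ℂ) (u v : Fin k → ℂ) :
    cip (B *ᵥ u) (B *ᵥ v) = cip u ((Bᴴ * B) *ᵥ v) := by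
  rw [← mulVec_mulVec, cip_mulVec Bᴴ, conjTranspose_conjTranspose]

lemma proj_sub (y a b : Fin k → ℂ) : proj y (a - b) = proj y a - proj y b := by
  simp only [proj, cip_sub_right, sub_smul]
  abel

lemma proj_smul_self {y : Fin k → ℂ} (hy : cip y y = 1) (c : ℂ) : proj y (c • y) = 0 := by
  rw [proj, cip_smul_right, hy, mul_one, sub_self]

end Cip

namespace Matrix.IsHermitian

variable {k : ℕ} {M : Matrix (Fin k) (Fin k) ℂ}

lemma cip_mulVec_comm (hM : M.IsHermitian) (u v : Fin k → ℂ) :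
    cip u (M *ᵥ v) = cip (M *ᵥ u) v := by
  rw [cip_mulVec, hM.eq]

lemma star_cip_mulVec_self (hM : M.IsHermitian) (x : Fin k → ℂ) :
    star (cip x (M *ᵥ x)) = cip x (M *ᵥ x) := by
  rw [star_cip, hM.cip_mulVec_comm]

lemma mul_cip_eq_one_of_fixedPoint (hM : M.IsHermitian) {x y : Fin k → ℂ} {K : ℂ}
    (hy : cip y y = 1) (hx : M *ᵥ x = y) (hs : cip y (M *ᵥ y) ≠ 0)
    (hK : K = cip y (M *ᵥ y) + K * cip (proj y x) (M *ᵥ y)) :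
    K * cip y x = 1 := by
  have hr : star (cip y x) = cip y x := by
    rw [← hx, ← hM.cip_mulVec_comm, hM.star_cip_mulVec_self]
  have hxMy : cip x (M *ᵥ y) = 1 := by rw [hM.cip_mulVec_comm, hx, hy]
  rw [proj, cip_sub_left, cip_smul_left, hr, hxMy] at hK
  have : cip y (M *ᵥ y) * (K * cip y x - 1) = 0 := by linear_combination hK
  exact sub_eq_zero.mp ((mul_eq_zero.mp this).resolve_left hs)

end Matrix.IsHermitian

lemma mulVec_add_smul_proj {k : ℕ} {M : Matrix (Fin k) (Fin k) ℂ} {x y : Fin k → ℂ} {K : ℂ}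
    (hx : M *ᵥ x = y) (hK : K * cip y x = 1) :
    M *ᵥ (y + K • proj y x) = K • y := by
  rw [proj, mulVec_add, mulVec_smul, mulVec_sub, mulVec_smul, hx, smul_sub, smul_smul, hK,
    one_smul]
  abel

lemma proj_mulVec_sub {k : ℕ} {M : Matrix (Fin k) (Fin k) ℂ} {m y : Fin k → ℂ} {K : ℂ}
    (hy : cip y y = 1) (hm : M *ᵥ m = K • y) :
    proj y (M *ᵥ (m - y)) = -proj y (M *ᵥ y) := by
  rw [mulVec_sub, hm, proj_sub, proj_smul_self hy, zero_sub]

theorem stmt19_general {n k : ℕ} (A : Matrix (Fin n) (Fin n) ℂ) (V : Matrix (Fin n) (Fin k) ℂ)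
    (θ : ℂ) (y x : Fin k → ℂ)
    (hy : nsq y = 1)
    (hnotexact : (A - θ • 1).mulVec (V.mulVec y) ≠ 0)
    (M : Matrix (Fin k) (Fin k) ℂ)
    (hM : M = Vᴴ * (A - θ • 1)ᴴ * ((A - θ • 1) * V))
    (hx : M.mulVec x = y)
    (K : ℂ)
    (hK : K = ((nsq ((A - θ • 1).mulVec (V.mulVec y)) : ℝ) : ℂ)
        + K * cip ((A - θ • 1).mulVec (V.mulVec (proj y x)))
            ((A - θ • 1).mulVec (V.mulVec y)))
    (m : Fin k → ℂ) (hm : m = y + K • proj y x) :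
    proj y (M.mulVec (m - y)) = -(proj y (M.mulVec y)) ∧ M.mulVec m = K • y := by
  set B := (A - θ • 1) * V
  have hMB : M = Bᴴ * B := by rw [hM, conjTranspose_mul]
  have hyy : cip y y = 1 := by rw [cip_self_eq_nsq, hy, Complex.ofReal_one]
  rw [mulVec_mulVec, mulVec_mulVec, ← cip_self_eq_nsq, cip_mulVec_mulVec,
    cip_mulVec_mulVec, ← hMB] at hK
  have hs : cip y (M *ᵥ y) ≠ 0 := by
    rwa [hMB, ← cip_mulVec_mulVec, Ne, cip_self_eq_zero, ← mulVec_mulVec]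
  have hMH : M.IsHermitian := hMB ▸ isHermitian_conjTranspose_mul_self B
  have hMm : M *ᵥ m = K • y :=
    hm ▸ mulVec_add_smul_proj hx (hMH.mul_cip_eq_one_of_fixedPoint hyy hx hs hK)
  exact ⟨proj_mulVec_sub hyy hMm, hMm⟩

theorem stmt19 {n k : ℕ} (A : Matrix (Fin n) (Fin n) ℂ) (V : Matrix (Fin n) (Fin k) ℂ)
    (θ : ℂ) (y x : Fin k → ℂ)
    (hV : Vᴴ * V = 1) (hy : nsq y = 1)
    (hRitz : (Vᴴ * ((A - θ • 1) * V)).mulVec y = 0)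
    (hnotexact : (A - θ • 1).mulVec (V.mulVec y) ≠ 0)
    (M : Matrix (Fin k) (Fin k) ℂ)
    (hM : M = Vᴴ * (A - θ • 1)ᴴ * ((A - θ • 1) * V))
    (hx : M.mulVec x = y)
    (K : ℂ)
    (hK : K = ((nsq ((A - θ • 1).mulVec (V.mulVec y)) : ℝ) : ℂ)
        + K * cip ((A - θ • 1).mulVec (V.mulVec (proj y x)))
            ((A - θ • 1).mulVec (V.mulVec y)))
    (m : Fin k → ℂ) (hm : m = y + K • proj y x) :
    proj y (M.mulVec (m - y)) = -(proj y (M.mulVec y)) ∧ M.mulVec m = K • y :=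
  stmt19_general A V θ y x hy hnotexact M hM hx K hK m hm
end
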